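/- arXiv:1710.11070 — 2 statements merged into one kernel-verified Lean document; each statement's English description precedes it below -/
import Mathlib

section
/- (Lemma 4: universal second-order identifiability.) For every θ ∈ Θ_{c_0}, 𝔡_{2,2}(θ) ≥ c(ν_0)/(V³K) > 0, where c(ν_0) := E_{ν_0}[h_1²] − E_{ν_0}[h_1h_2] is a positive constant depending only on ν_0. -/
open MeasureTheory Filter

noncomputable section

namespace TopicModel

/-- The probability simplex in `ℝ^K`. -/
def simplex (K : ℕ) : Set (Fin K → ℝ) := {h | (∀ k, 0 ≤ h k) ∧ ∑ k, h k = 1}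

/-- The parameter set `Θ_{c₀}`: `K` topic vectors, each a probability vector on `[V]`
with all entries at least `c₀`. -/
def Theta (c0 : ℝ) (V K : ℕ) : Set (Fin K → Fin V → ℝ) :=
  {θ | (∀ k ℓ, c0 ≤ θ k ℓ) ∧ ∀ k, ∑ ℓ, θ k ℓ = 1}

/-- `θ` is a tuple of probability vectors. -/
def IsParam {V K : ℕ} (θ : Fin K → Fin V → ℝ) : Prop :=
  (∀ k ℓ, 0 ≤ θ k ℓ) ∧ ∀ k, ∑ ℓ, θ k ℓ = 1

/-- Word probability `p_{θ,h}(v) = Σ_k h_k θ_k(v)`. -/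
def pWord {V K : ℕ} (θ : Fin K → Fin V → ℝ) (h : Fin K → ℝ) (v : Fin V) : ℝ :=
  ∑ k, h k * θ k v

/-- Document probability given mixing vector `h`: `p_{θ,h}(x) = Π_i p_{θ,h}(x_i)`. -/
def pDoc {V K : ℕ} (m : ℕ) (θ : Fin K → Fin V → ℝ) (h : Fin K → ℝ)
    (x : Fin m → Fin V) : ℝ :=
  ∏ i, pWord θ h (x i)

/-- Marginal document probability `p_{θ,m}(x) = ∫ p_{θ,h}(x) dν₀(h)`. -/
def pM {V K : ℕ} (ν0 : Measure (Fin K → ℝ)) (m : ℕ) (θ : Fin K → Fin V → ℝ)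
    (x : Fin m → Fin V) : ℝ :=
  ∫ h, pDoc m θ h x ∂ν0

/-- `ℓ¹`-norm of a `K × V` array: `‖δ‖₁ = Σ_k Σ_ℓ |δ_k(ℓ)|`. -/
def norm1 {V K : ℕ} (δ : Fin K → Fin V → ℝ) : ℝ := ∑ k, ∑ ℓ, |δ k ℓ|

/-- Wasserstein distance between parameters:
`d_W(θ,θ') = min_π Σ_k ‖θ_k − θ'_{π(k)}‖₁`. -/
def dW {V K : ℕ} (θ θ' : Fin K → Fin V → ℝ) : ℝ :=
  ⨅ π : Equiv.Perm (Fin K), ∑ k, ∑ ℓ, |θ k ℓ - θ' (π k) ℓ|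

/-- `L¹` distance between the document pmfs of two parameters. -/
def distL1 {V K : ℕ} (ν0 : Measure (Fin K → ℝ)) (m : ℕ)
    (θ θ' : Fin K → Fin V → ℝ) : ℝ :=
  ∑ x : Fin m → Fin V, |pM ν0 m θ x - pM ν0 m θ' x|

/-- The `p`-th order degeneracy criterion `𝔡_{m,p}(θ)`: the infimum over all
`δ` with `‖δ‖₁ = 1` and `Σ_ℓ δ_k(ℓ) = 0` for every `k`, of
`Σ_{x ∈ [V]^m} |∫ p_{θ,h}(x) Σ_{i₁<⋯<i_p} Π_t (δ_h(x_{i_t}) / p_{θ,h}(x_{i_t})) dν₀|`. -/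
def degen {V K : ℕ} (ν0 : Measure (Fin K → ℝ)) (m : ℕ) (θ : Fin K → Fin V → ℝ)
    (p : ℕ) : ℝ :=
  sInf {r : ℝ | ∃ δ : Fin K → Fin V → ℝ, norm1 δ = 1 ∧ (∀ k, ∑ ℓ, δ k ℓ = 0) ∧
    r = ∑ x : Fin m → Fin V,
      |∫ h, pDoc m θ h x *
        ∑ S ∈ Finset.powersetCard p (Finset.univ : Finset (Fin m)),
          ∏ i ∈ S, ((∑ k, h k * δ k (x i)) / pWord θ h (x i)) ∂ν0|}

/-- The order of degeneracy `𝔭(m;θ) ∈ ℕ ∪ {∞}`: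
the least `p ∈ {1,…,m}` with `𝔡_{m,p}(θ) > 0`, or `∞` if none exists. -/
def pOrder {V K : ℕ} (ν0 : Measure (Fin K → ℝ)) (m : ℕ) (θ : Fin K → Fin V → ℝ) : ℕ∞ :=
  sInf ((↑) '' {p : ℕ | 1 ≤ p ∧ p ≤ m ∧ 0 < degen ν0 m θ p})

/-- Assumption (A2) on the mixing measure `ν₀`: a Borel probability measure supported on the
simplex, exchangeable, with `E[h₁²] > E[h₁h₂]` and (when `K ≥ 3`)
`E[h₁³] + 2E[h₁h₂h₃] > 3E[h₁²h₂]`. -/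
structure NiceMixing (K : ℕ) (ν0 : Measure (Fin K → ℝ)) : Prop where
  prob : IsProbabilityMeasure ν0
  support : ν0 (simplex K)ᶜ = 0
  exch : ∀ π : Equiv.Perm (Fin K), Measure.map (fun h => h ∘ π) ν0 = ν0
  mom2 : ∀ i j : Fin K, i ≠ j → ∫ h, h i * h j ∂ν0 < ∫ h, h i ^ 2 ∂ν0
  mom3 : ∀ i j k : Fin K, i ≠ j → j ≠ k → i ≠ k →
    3 * ∫ h, h i ^ 2 * h j ∂ν0 < ∫ h, h i ^ 3 ∂ν0 + 2 * ∫ h, h i * h j * h k ∂ν0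

/-- The equivalence class `Θ̃_{c₀}(θ)` of parameters inducing the same document pmf as `θ`. -/
def equivClass {V K : ℕ} (ν0 : Measure (Fin K → ℝ)) (m : ℕ) (c0 : ℝ)
    (θ : Fin K → Fin V → ℝ) : Set (Fin K → Fin V → ℝ) :=
  {θ' | θ' ∈ Theta c0 V K ∧ ∀ x : Fin m → Fin V, pM ν0 m θ' x = pM ν0 m θ x}

/-- Probability of the event `A` under `n` i.i.d. draws from the pmf `p` on a finite set. -/
def prodProb {α : Type*} [Fintype α] (p : α → ℝ) (n : ℕ) (A : Set (Fin n → α)) : ℝ :=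
  ∑ xs : Fin n → α, A.indicator (fun ys => ∏ i, p (ys i)) xs

end TopicModel

namespace TopicModel

section Aux

variable {K : ℕ} {ν0 : MeasureTheory.Measure (Fin K → ℝ)}

open MeasureTheory

lemma NiceMixing.ae_simplex (hν0 : NiceMixing K ν0) : ∀ᵐ h ∂ν0, h ∈ simplex K := by
  rw [MeasureTheory.ae_iff]
  exact hν0.support

lemma simplex_nonneg {h : Fin K → ℝ} (hh : h ∈ simplex K) (k : Fin K) : 0 ≤ h k := hh.1 k

lemma simplex_le_one {h : Fin K → ℝ} (hh : h ∈ simplex K) (k : Fin K) : h k ≤ 1 := by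
  have := Finset.single_le_sum (f := h) (fun i _ => hh.1 i) (Finset.mem_univ k)
  simpa [hh.2] using this

lemma integrable_mul2 (hν0 : NiceMixing K ν0) (k l : Fin K) :
    Integrable (fun h : Fin K → ℝ => h k * h l) ν0 := by
  have := hν0.prob
  refine Integrable.mono' (g := fun _ => (1:ℝ)) (integrable_const 1)
    ((measurable_pi_apply k).mul (measurable_pi_apply l)).aestronglyMeasurable ?_
  filter_upwards [hν0.ae_simplex] with h hh
  have h1 := simplex_nonneg hh k
  have h2 := simplex_nonneg hh l
  have h3 := simplex_le_one hh k
  have h4 := simplex_le_one hh l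
  rw [Real.norm_eq_abs, abs_mul, abs_of_nonneg h1, abs_of_nonneg h2]
  nlinarith

lemma mom_perm (hν0 : NiceMixing K ν0) (i j : Fin K) (π : Equiv.Perm (Fin K)) :
    ∫ h, h i * h j ∂ν0 = ∫ h, h (π i) * h (π j) ∂ν0 := by
  conv_lhs => rw [← hν0.exch π]
  rw [integral_map (φ := fun h : Fin K → ℝ => h ∘ π) (f := fun h : Fin K → ℝ => h i * h j)
    (measurable_pi_lambda _ fun a => measurable_pi_apply (π a)).aemeasurable
    (((measurable_pi_apply i).mul (measurable_pi_apply j)).aestronglyMeasurable)]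
  simp [Function.comp]

lemma exists_perm_pair {i j i0 i1 : Fin K} (hij : i ≠ j) (h01 : i0 ≠ i1) :
    ∃ π : Equiv.Perm (Fin K), π i = i0 ∧ π j = i1 := by
  classical
  set σ := Equiv.swap i i0 with hσ
  have hσi : σ i = i0 := Equiv.swap_apply_left i i0
  set j' := σ j with hj'def
  have hj' : j' ≠ i0 := by
    intro hc
    have : σ j = σ i := by rw [← hj'def, hc, hσi]
    exact hij (σ.injective this).symm
  refine ⟨σ.trans (Equiv.swap j' i1), ?_, ?_⟩
  · simp only [Equiv.trans_apply, hσi]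
    exact Equiv.swap_apply_of_ne_of_ne (Ne.symm hj') h01
  · simp only [Equiv.trans_apply, ← hj'def]
    exact Equiv.swap_apply_left j' i1

lemma mom_eq_offdiag (hν0 : NiceMixing K ν0) {i j i0 i1 : Fin K} (hij : i ≠ j) (h01 : i0 ≠ i1) :
    ∫ h, h i * h j ∂ν0 = ∫ h, h i0 * h i1 ∂ν0 := by
  obtain ⟨π, h1, h2⟩ := exists_perm_pair hij h01
  rw [mom_perm hν0 i j π, h1, h2]

lemma mom_eq_diag (hν0 : NiceMixing K ν0) (k i0 : Fin K) :
    ∫ h, h k * h k ∂ν0 = ∫ h, h i0 * h i0 ∂ν0 := by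
  rw [mom_perm hν0 k k (Equiv.swap k i0), Equiv.swap_apply_left]

end Aux

/-- **Lemma 4 (universal second-order identifiability).**
For every `θ ∈ Θ_{c₀}`, `𝔡_{2,2}(θ) ≥ c(ν₀)/(V³K) > 0`, where
`c(ν₀) = E_{ν₀}[h₁²] − E_{ν₀}[h₁h₂] > 0`. -/

theorem degen_two_two_lower_bound
    {V K : ℕ} (hV : 2 ≤ V) (hK : 2 ≤ K) {c0 : ℝ} (hc0 : 0 < c0)
    (ν0 : Measure (Fin K → ℝ)) (hν0 : NiceMixing K ν0)
    (θ : Fin K → Fin V → ℝ) (hθ : θ ∈ Theta c0 V K) :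
    0 < ((∫ h, h (⟨0, by omega⟩ : Fin K) ^ 2 ∂ν0)
          - ∫ h, h (⟨0, by omega⟩ : Fin K) * h (⟨1, by omega⟩ : Fin K) ∂ν0)
        / ((V : ℝ) ^ 3 * K) ∧
    ((∫ h, h (⟨0, by omega⟩ : Fin K) ^ 2 ∂ν0)
          - ∫ h, h (⟨0, by omega⟩ : Fin K) * h (⟨1, by omega⟩ : Fin K) ∂ν0)
        / ((V : ℝ) ^ 3 * K) ≤ degen ν0 2 θ 2 := by
  classical
  set i0 : Fin K := ⟨0, by omega⟩ with hi0
  set i1 : Fin K := ⟨1, by omega⟩ with hi1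
  have h01 : i0 ≠ i1 := by simp [hi0, hi1, Fin.ext_iff]
  set a := ∫ h, h i0 ^ 2 ∂ν0 with ha
  set b := ∫ h, h i0 * h i1 ∂ν0 with hb
  have hsqa : (∫ h, h i0 * h i0 ∂ν0) = a := by
    rw [ha]; congr 1; funext h; ring
  have hc : 0 < a - b := sub_pos.mpr (hν0.mom2 i0 i1 h01)
  have hV2 : (2:ℝ) ≤ (V:ℝ) := by exact_mod_cast hV
  have hVpos : (0:ℝ) < V := by linarith
  have hKpos : (0:ℝ) < K := by
    have : (2:ℝ) ≤ (K:ℝ) := by exact_mod_cast hK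
    linarith
  have hden : (0:ℝ) < (V:ℝ)^3 * K := by positivity
  refine ⟨div_pos hc hden, ?_⟩
  rw [degen]
  refine le_csInf ?_ ?_
  · -- the constraint set is nonempty
    set j0 : Fin V := ⟨0, by omega⟩ with hj0
    set j1 : Fin V := ⟨1, by omega⟩ with hj1
    have hj01 : j0 ≠ j1 := by simp [hj0, hj1, Fin.ext_iff]
    refine ⟨_, fun k ℓ =>
      if k = i0 then (if ℓ = j0 then (1:ℝ)/2 else 0) - (if ℓ = j1 then 1/2 else 0) else 0,
      ?_, ?_, rfl⟩
    · rw [norm1]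
      have key : ∀ k : Fin K,
          (∑ ℓ, |if k = i0 then (if ℓ = j0 then (1:ℝ)/2 else 0) - (if ℓ = j1 then 1/2 else 0)
            else 0|) = if k = i0 then 1 else 0 := by
        intro k
        by_cases hk : k = i0
        · rw [if_pos hk]
          have hpt : ∀ ℓ : Fin V,
              |if k = i0 then (if ℓ = j0 then (1:ℝ)/2 else 0) - (if ℓ = j1 then 1/2 else 0)
                else 0|
              = (if ℓ = j0 then (1:ℝ)/2 else 0) + (if ℓ = j1 then 1/2 else 0) := by
            intro ℓ
            rw [if_pos hk]
            by_cases h0 : ℓ = j0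
            · have h1 : ℓ ≠ j1 := fun hc => hj01 (h0.symm.trans hc)
              rw [if_pos h0, if_neg h1]; norm_num
            · by_cases h1 : ℓ = j1
              · rw [if_neg h0, if_pos h1]; norm_num
              · rw [if_neg h0, if_neg h1]; norm_num
          rw [Finset.sum_congr rfl fun ℓ _ => hpt ℓ, Finset.sum_add_distrib,
            Finset.sum_ite_eq' Finset.univ j0, Finset.sum_ite_eq' Finset.univ j1]
          simp only [Finset.mem_univ, if_true]
          norm_num
        · rw [if_neg hk]
          simp [hk]
      rw [Finset.sum_congr rfl fun k _ => key k, Finset.sum_ite_eq' Finset.univ i0]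
      simp
    · intro k
      by_cases hk : k = i0 <;>
        simp [hk, Finset.sum_sub_distrib, Finset.sum_ite_eq']
  · rintro r ⟨δ, hnorm, hrow, rfl⟩
    set F : (Fin 2 → Fin V) → ℝ := fun x =>
      ∫ h, pDoc 2 θ h x *
        ∑ S ∈ Finset.powersetCard 2 (Finset.univ : Finset (Fin 2)),
          ∏ i ∈ S, ((∑ k, h k * δ k (x i)) / pWord θ h (x i)) ∂ν0 with hFdef
    have hF : ∀ x : Fin 2 → Fin V,
        F x = ∑ k, ∑ l, δ k (x 0) * δ l (x 1) * ∫ h, h k * h l ∂ν0 := by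
      intro x
      have hps : Finset.powersetCard 2 (Finset.univ : Finset (Fin 2)) = {Finset.univ} := by
        decide
      have hcongr : F x = ∫ h, ∑ k, ∑ l, δ k (x 0) * δ l (x 1) * (h k * h l) ∂ν0 := by
        simp only [hFdef]
        refine integral_congr_ae ?_
        filter_upwards [hν0.ae_simplex] with h hh
        have hp : ∀ v : Fin V, 0 < pWord θ h v := by
          intro v
          have hle : c0 ≤ pWord θ h v := by
            have hsum : (∑ k, h k * c0) ≤ ∑ k, h k * θ k v :=
              Finset.sum_le_sum fun k _ => mul_le_mul_of_nonneg_left (hθ.1 k v) (hh.1 k)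
            calc c0 = ∑ k, h k * c0 := by rw [← Finset.sum_mul, hh.2, one_mul]
              _ ≤ ∑ k, h k * θ k v := hsum
              _ = pWord θ h v := rfl
          linarith
        show pDoc 2 θ h x *
            (∑ S ∈ Finset.powersetCard 2 (Finset.univ : Finset (Fin 2)),
              ∏ i ∈ S, ((∑ k, h k * δ k (x i)) / pWord θ h (x i)))
            = ∑ k, ∑ l, δ k (x 0) * δ l (x 1) * (h k * h l)
        rw [hps, Finset.sum_singleton, pDoc, ← Finset.prod_mul_distrib]
        have heach : ∀ i : Fin 2,
            pWord θ h (x i) * ((∑ k, h k * δ k (x i)) / pWord θ h (x i))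
            = ∑ k, h k * δ k (x i) := by
          intro i
          rw [mul_comm]
          exact div_mul_cancel₀ _ (ne_of_gt (hp (x i)))
        rw [Finset.prod_congr rfl fun i _ => heach i, Fin.prod_univ_two,
          Finset.sum_mul_sum]
        exact Finset.sum_congr rfl fun k _ => Finset.sum_congr rfl fun l _ => by ring
      rw [hcongr]
      have hint : ∀ k l : Fin K,
          Integrable (fun h : Fin K → ℝ => δ k (x 0) * δ l (x 1) * (h k * h l)) ν0 :=
        fun k l => (integrable_mul2 hν0 k l).const_mul _
      rw [integral_finset_sum _ fun k _ => integrable_finset_sum _ fun l _ => hint k l]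
      refine Finset.sum_congr rfl fun k _ => ?_
      rw [integral_finset_sum _ fun l _ => hint k l]
      exact Finset.sum_congr rfl fun l _ => integral_const_mul _ _
    have hFdiag : ∀ u : Fin V,
        F (fun _ => u) = ∑ k, ∑ l, δ k u * δ l u * ∫ h, h k * h l ∂ν0 :=
      fun u => hF (fun _ => u)
    have hmom : ∀ k l : Fin K, (∫ h, h k * h l ∂ν0) = if k = l then a else b := by
      intro k l
      by_cases hkl : k = l
      · subst hkl; rw [if_pos rfl, mom_eq_diag hν0 k i0, hsqa]
      · rw [if_neg hkl, mom_eq_offdiag hν0 hkl h01]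
    have hb0 : 0 ≤ b := by
      rw [hb]
      refine integral_nonneg_of_ae ?_
      filter_upwards [hν0.ae_simplex] with h hh
      exact mul_nonneg (hh.1 i0) (hh.1 i1)
    have hdiag : ∀ u : Fin V, (a - b) * ∑ k, δ k u ^ 2 ≤ F (fun _ => u) := by
      intro u
      rw [hFdiag]
      have hterm : ∀ k : Fin K,
          ∑ l, δ k u * δ l u * (∫ h, h k * h l ∂ν0)
          = δ k u * (∑ l, δ l u) * b + (a - b) * δ k u ^ 2 := by
        intro k
        have hpt : ∀ l : Fin K,
            δ k u * δ l u * (∫ h, h k * h l ∂ν0)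
            = δ k u * δ l u * b + (if l = k then (a - b) * δ k u ^ 2 else 0) := by
          intro l
          rw [hmom]
          by_cases hl : l = k
          · subst hl; rw [if_pos rfl, if_pos rfl]; ring
          · rw [if_neg (fun hh => hl hh.symm), if_neg hl]; ring
        rw [Finset.sum_congr rfl fun l _ => hpt l, Finset.sum_add_distrib,
          Finset.sum_ite_eq' Finset.univ k, if_pos (Finset.mem_univ k)]
        congr 1
        have : δ k u * (∑ l, δ l u) * b = ∑ l, δ k u * δ l u * b := by
          rw [Finset.mul_sum, Finset.sum_mul]
        rw [this]
      rw [Finset.sum_congr rfl fun k _ => hterm k, Finset.sum_add_distrib]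
      have h1 : ∑ k, δ k u * (∑ l, δ l u) * b = (∑ k, δ k u)^2 * b := by
        rw [← Finset.sum_mul, ← Finset.sum_mul, sq]
      rw [h1, ← Finset.mul_sum]
      have h2 : 0 ≤ (∑ k, δ k u)^2 * b := mul_nonneg (sq_nonneg _) hb0
      linarith
    have hstep2 : (a - b) * ∑ u : Fin V, ∑ k, δ k u ^ 2 ≤ ∑ u : Fin V, |F (fun _ => u)| := by
      rw [Finset.mul_sum]
      exact Finset.sum_le_sum fun u _ => (hdiag u).trans (le_abs_self _)
    have hinj : ∀ x ∈ (Finset.univ : Finset (Fin V)), ∀ y ∈ (Finset.univ : Finset (Fin V)),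
        (fun u : Fin V => (fun _ : Fin 2 => u)) x = (fun u : Fin V => (fun _ : Fin 2 => u)) y
        → x = y := by
      intro x _ y _ hxy
      exact congrFun hxy 0
    have hstep1 : ∑ u : Fin V, |F (fun _ => u)| ≤ ∑ x : Fin 2 → Fin V, |F x| := by
      have himg : ∑ x ∈ Finset.image (fun u : Fin V => (fun _ : Fin 2 => u)) Finset.univ,
          |F x| = ∑ u : Fin V, |F (fun _ => u)| := Finset.sum_image hinj
      rw [← himg]
      exact Finset.sum_le_sum_of_subset_of_nonneg (Finset.subset_univ _)
        (fun x _ _ => abs_nonneg _)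
    -- Cauchy–Schwarz
    have hnorm' : (∑ k, ∑ ℓ, |δ k ℓ|) = 1 := hnorm
    have hKV : (0:ℝ) < (K:ℝ) * V := by positivity
    have hCS : (1:ℝ) ≤ ((K:ℝ) * V) * ∑ u : Fin V, ∑ k, δ k u ^ 2 := by
      have hcs := sq_sum_le_card_mul_sum_sq
        (s := (Finset.univ : Finset (Fin K × Fin V))) (f := fun p => |δ p.1 p.2|)
      have e1 : ∑ p : Fin K × Fin V, |δ p.1 p.2| = ∑ k, ∑ ℓ, |δ k ℓ| :=
        Fintype.sum_prod_type _
      have e2 : ∑ p : Fin K × Fin V, |δ p.1 p.2| ^ 2 = ∑ u : Fin V, ∑ k, δ k u ^ 2 := by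
        rw [Fintype.sum_prod_type, Finset.sum_comm]
        exact Finset.sum_congr rfl fun u _ => Finset.sum_congr rfl fun k _ => sq_abs _
      rw [e1, e2, hnorm', one_pow] at hcs
      have ecard : ((Finset.univ : Finset (Fin K × Fin V)).card : ℝ) = (K:ℝ) * V := by
        simp [Finset.card_univ]
      calc (1:ℝ) ≤ ((Finset.univ : Finset (Fin K × Fin V)).card : ℝ)
            * ∑ u : Fin V, ∑ k, δ k u ^ 2 := hcs
        _ = ((K:ℝ) * V) * ∑ u : Fin V, ∑ k, δ k u ^ 2 := by rw [ecard]
    have hS : 1/((K:ℝ)*V) ≤ ∑ u : Fin V, ∑ k, δ k u ^ 2 := by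
      rw [div_le_iff₀ hKV]
      nlinarith [hCS]
    have e3 : (a - b)/((V:ℝ)^3 * K) ≤ (a - b)/((K:ℝ)*V) := by
      apply div_le_div_of_nonneg_left hc.le hKV
      have h1 : (0:ℝ) ≤ (V:ℝ)^2 - 1 := by nlinarith
      have h2 : (0:ℝ) ≤ (K:ℝ)*V*((V:ℝ)^2-1) :=
        mul_nonneg (mul_nonneg hKpos.le hVpos.le) h1
      nlinarith [h2]
    calc (a - b)/((V:ℝ)^3 * K) ≤ (a - b)/((K:ℝ)*V) := e3
      _ = (a - b) * (1/((K:ℝ)*V)) := by ring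
      _ ≤ (a - b) * ∑ u : Fin V, ∑ k, δ k u ^ 2 :=
          mul_le_mul_of_nonneg_left hS hc.le
      _ ≤ ∑ u : Fin V, |F (fun _ => u)| := hstep2
      _ ≤ ∑ x : Fin 2 → Fin V, |F x| := hstep1

end TopicModel
end
end

section
/- (Proposition 1: polynomial-system characterization of positive degeneracy criterion.) Fix m ≥ 1, 1 ≤ p ≤ m and θ ∈ Θ_{c_0}. For x = (x_1,…,x_m) ∈ [V]^m, indices 1 ≤ i_1 < ⋯ < i_p ≤ m and j_1,…,j_p ∈ [K], define ξ(i,j;θ,x) = ∫ ( Π_{i ∉ {i_1,…,i_p}} p_{θ,h}(x_i) ) · Π_{t=1}^p h_{j_t} dν_0(h). Then 𝔡_{m,p}(θ) > 0 if and only if the only δ = (δ_{jk})_{j∈[K],k∈[V]} ∈ ℝ^{K×V} satisfying both (i) Σ_{1≤i_1<⋯<i_p≤m} Σ_{j_1,…,j_p=1}^K ξ(i,j;θ,x) Π_{t=1}^p δ_{j_t, x_{i_t}} = 0 for every x ∈ [V]^m, and (ii) Σ_{k=1}^V δ_{jk} = 0 for every j ∈ [K], is δ = 0. -/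
open MeasureTheory Filter

noncomputable section

/-! On the simplex every `p_{θ,h}(v)` is positive, so the integrand of `𝔡_{m,p}(θ)` expands into
the polynomial `F(δ, x) = Σ_{i,j} ξ(i,j;θ,x) Π_t δ_{j_t,x_{i_t}}`. Thus `𝔡_{m,p}(θ)` is the infimum of
the continuous function `δ ↦ Σ_x |F(δ, x)|` over the compact set of `ℓ¹`-unit `δ` with zero row
sums, and this infimum is attained. As `F` is homogeneous of degree `p` in `δ`, the minimum vanishes
exactly when the system has a non-zero solution with zero row sums. -/

namespace TopicModel

open Finset

lemma prod_mul_prod_div_eq_prod_compl_mul_prod {ι F : Type*} [Fintype ι] [DecidableEq ι]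
    [Field F] {q : ι → F} {S : Finset ι} (hq : ∀ i ∈ S, q i ≠ 0) (a : ι → F) :
    (∏ i, q i) * ∏ i ∈ S, a i / q i = (∏ i ∈ Sᶜ, q i) * ∏ i ∈ S, a i := by
  rw [← prod_mul_prod_compl S, prod_div_distrib, mul_comm (∏ i ∈ S, q i), mul_assoc,
    mul_div_cancel₀ _ (prod_ne_zero_iff.2 hq)]

variable {V K m : ℕ}

lemma isCompact_simplex : IsCompact (simplex K) := isCompact_stdSimplex ℝ (Fin K)

@[fun_prop]
lemma continuous_pWord (θ : Fin K → Fin V → ℝ) (v : Fin V) :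
    Continuous fun h : Fin K → ℝ => pWord θ h v := by
  unfold pWord
  fun_prop

lemma pWord_pos {θ : Fin K → Fin V → ℝ} (hθ : ∀ k v, 0 < θ k v) {h : Fin K → ℝ}
    (hh : h ∈ simplex K) (v : Fin V) : 0 < pWord θ h v := by
  obtain ⟨k, hk⟩ : ∃ k, 0 < h k := by
    by_contra! hle
    linarith [sum_nonpos fun k (_ : k ∈ univ) => hle k, hh.2]
  exact sum_pos' (fun j _ => mul_nonneg (hh.1 j) (hθ j v).le)
    ⟨k, mem_univ k, mul_pos hk (hθ k v)⟩

lemma integrable_of_continuous_of_simplex {ν0 : Measure (Fin K → ℝ)} [IsFiniteMeasure ν0]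
    (hsupp : ν0 (simplex K)ᶜ = 0) {f : (Fin K → ℝ) → ℝ} (hf : Continuous f) :
    Integrable f ν0 := by
  rw [← Measure.restrict_eq_self_of_ae_mem (mem_ae_iff.2 hsupp)]
  exact hf.continuousOn.integrableOn_compact isCompact_simplex

/-- The coefficient `ξ(i, j; θ, x)`, with `S = {i₁, …, i_p}` and `j : S → [K]`. -/
def xi (ν0 : Measure (Fin K → ℝ)) (θ : Fin K → Fin V → ℝ) (x : Fin m → Fin V)
    (S : Finset (Fin m)) (j : S → Fin K) : ℝ :=
  ∫ h, (∏ i ∈ Sᶜ, pWord θ h (x i)) * ∏ i : S, h (j i) ∂ν0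

def polySystem (ν0 : Measure (Fin K → ℝ)) (m : ℕ) (θ : Fin K → Fin V → ℝ) (p : ℕ)
    (δ : Fin K → Fin V → ℝ) (x : Fin m → Fin V) : ℝ :=
  ∑ S ∈ powersetCard p univ, ∑ j : S → Fin K, xi ν0 θ x S j * ∏ i : S, δ (j i) (x i)

lemma integral_degen_integrand {ν0 : Measure (Fin K → ℝ)} [IsFiniteMeasure ν0]
    (hsupp : ν0 (simplex K)ᶜ = 0) {θ : Fin K → Fin V → ℝ} (hθ : ∀ k v, 0 < θ k v)
    (p : ℕ) (δ : Fin K → Fin V → ℝ) (x : Fin m → Fin V) :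
    ∫ h, pDoc m θ h x * ∑ S ∈ powersetCard p univ,
        ∏ i ∈ S, ((∑ k, h k * δ k (x i)) / pWord θ h (x i)) ∂ν0 =
      polySystem ν0 m θ p δ x := by
  have hexpand : ∀ h ∈ simplex K,
      pDoc m θ h x * ∑ S ∈ powersetCard p univ,
        ∏ i ∈ S, ((∑ k, h k * δ k (x i)) / pWord θ h (x i)) =
      ∑ S ∈ powersetCard p univ, ∑ j : S → Fin K,
        ((∏ i ∈ Sᶜ, pWord θ h (x i)) * ∏ i : S, h (j i)) * ∏ i : S, δ (j i) (x i) := by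
    intro h hh
    refine (mul_sum _ _ _).trans (sum_congr rfl fun S _ => ?_)
    rw [pDoc, prod_mul_prod_div_eq_prod_compl_mul_prod fun i _ => (pWord_pos hθ hh (x i)).ne',
      ← prod_coe_sort S]
    simp only [Fintype.prod_sum, prod_mul_distrib, mul_sum, mul_assoc]
  have hint : ∀ (S : Finset (Fin m)) (j : S → Fin K), Integrable
      (fun h => (∏ i ∈ Sᶜ, pWord θ h (x i)) * ∏ i : S, h (j i)) ν0 := fun S j =>
    integrable_of_continuous_of_simplex hsupp (by fun_prop)
  rw [integral_congr_ae (Filter.Eventually.mono (mem_ae_iff.2 hsupp) hexpand),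
    integral_finsetSum _ fun S _ => integrable_finsetSum _ fun j _ => (hint S j).mul_const _]
  refine sum_congr rfl fun S _ => ?_
  rw [integral_finsetSum _ fun j _ => (hint S j).mul_const _]
  exact sum_congr rfl fun j _ => integral_mul_const _ _

lemma polySystem_smul (ν0 : Measure (Fin K → ℝ)) (θ : Fin K → Fin V → ℝ) (p : ℕ) (c : ℝ)
    (δ : Fin K → Fin V → ℝ) (x : Fin m → Fin V) :
    polySystem ν0 m θ p (c • δ) x = c ^ p * polySystem ν0 m θ p δ x := by
  simp only [polySystem, mul_sum]
  refine sum_congr rfl fun S hS => sum_congr rfl fun j _ => ?_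
  have hcard : Fintype.card S = p := by simpa using (mem_powersetCard.1 hS).2
  simp only [Pi.smul_apply, smul_eq_mul, prod_mul_distrib, prod_const, card_univ, hcard]
  ring

lemma continuous_polySystem (ν0 : Measure (Fin K → ℝ)) (θ : Fin K → Fin V → ℝ) (p : ℕ)
    (x : Fin m → Fin V) : Continuous fun δ => polySystem ν0 m θ p δ x := by
  unfold polySystem
  fun_prop

def residual (ν0 : Measure (Fin K → ℝ)) (m : ℕ) (θ : Fin K → Fin V → ℝ) (p : ℕ)
    (δ : Fin K → Fin V → ℝ) : ℝ :=
  ∑ x : Fin m → Fin V, |polySystem ν0 m θ p δ x|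

lemma residual_nonneg (ν0 : Measure (Fin K → ℝ)) (m : ℕ) (θ : Fin K → Fin V → ℝ) (p : ℕ)
    (δ : Fin K → Fin V → ℝ) : 0 ≤ residual ν0 m θ p δ :=
  sum_nonneg fun _ _ => abs_nonneg _

lemma residual_eq_zero_iff {ν0 : Measure (Fin K → ℝ)} {θ : Fin K → Fin V → ℝ} {p : ℕ}
    {δ : Fin K → Fin V → ℝ} :
    residual ν0 m θ p δ = 0 ↔ ∀ x, polySystem ν0 m θ p δ x = 0 := by
  simp [residual, sum_eq_zero_iff_of_nonneg]

lemma continuous_residual (ν0 : Measure (Fin K → ℝ)) (m : ℕ) (θ : Fin K → Fin V → ℝ)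
    (p : ℕ) : Continuous (residual ν0 m θ p) :=
  continuous_finsetSum _ fun x _ => (continuous_polySystem ν0 θ p x).abs

lemma norm1_nonneg (δ : Fin K → Fin V → ℝ) : 0 ≤ norm1 δ :=
  sum_nonneg fun _ _ => sum_nonneg fun _ _ => abs_nonneg _

lemma norm1_eq_zero_iff {δ : Fin K → Fin V → ℝ} : norm1 δ = 0 ↔ δ = 0 := by
  have habs : ∀ k, 0 ≤ ∑ ℓ, |δ k ℓ| := fun k => sum_nonneg fun ℓ _ => abs_nonneg _
  simp [norm1, sum_eq_zero_iff_of_nonneg, habs, funext_iff]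

lemma norm1_smul (c : ℝ) (δ : Fin K → Fin V → ℝ) : norm1 (c • δ) = |c| * norm1 δ := by
  simp [norm1, abs_mul, mul_sum]

def unitTangents (V K : ℕ) : Set (Fin K → Fin V → ℝ) :=
  {δ | norm1 δ = 1 ∧ ∀ k, ∑ ℓ, δ k ℓ = 0}

lemma inv_norm1_smul_mem_unitTangents {δ : Fin K → Fin V → ℝ} (hδ : δ ≠ 0)
    (hrow : ∀ k, ∑ ℓ, δ k ℓ = 0) : (norm1 δ)⁻¹ • δ ∈ unitTangents V K := by
  have hpos : 0 < norm1 δ := (norm1_nonneg δ).lt_of_ne' (norm1_eq_zero_iff.not.2 hδ)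
  refine ⟨?_, fun k => ?_⟩
  · rw [norm1_smul, abs_inv, abs_of_pos hpos, inv_mul_cancel₀ hpos.ne']
  · simp [← mul_sum, hrow k]

lemma isCompact_unitTangents : IsCompact (unitTangents V K) := by
  have hclosed : IsClosed (unitTangents V K) := by
    have hrow : IsClosed {δ : Fin K → Fin V → ℝ | ∀ k, ∑ ℓ, δ k ℓ = 0} := by
      rw [Set.ofPred_forall]
      exact isClosed_iInter fun k => isClosed_eq (by fun_prop) continuous_const
    exact (isClosed_eq (by unfold norm1; fun_prop) continuous_const).inter hrow
  refine (isCompact_closedBall 0 1).of_isClosed_subset hclosed fun δ hδ => ?_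
  rw [mem_closedBall_zero_iff, pi_norm_le_iff_of_nonneg zero_le_one]
  refine fun k => (pi_norm_le_iff_of_nonneg zero_le_one).2 fun ℓ => ?_
  calc ‖δ k ℓ‖ ≤ ∑ ℓ', |δ k ℓ'| :=
        single_le_sum (f := fun ℓ' => |δ k ℓ'|) (fun _ _ => abs_nonneg _) (mem_univ ℓ)
    _ ≤ norm1 δ := single_le_sum (f := fun k' => ∑ ℓ', |δ k' ℓ'|)
        (fun _ _ => sum_nonneg fun _ _ => abs_nonneg _) (mem_univ k)
    _ = 1 := hδ.1

lemma unitTangents_nonempty (hK : 0 < K) (hV : 1 < V) : (unitTangents V K).Nonempty := by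
  let a : Fin V := ⟨0, by omega⟩
  let b : Fin V := ⟨1, hV⟩
  have hab : a ≠ b := by simp [a, b, Fin.ext_iff]
  let δ : Fin K → Fin V → ℝ := fun _ => Pi.single a 1 - Pi.single b 1
  have hδ : δ ≠ 0 := fun h => by
    simpa [δ, hab] using congr_fun (congr_fun h ⟨0, hK⟩) a
  exact ⟨_, inv_norm1_smul_mem_unitTangents hδ fun k => by simp [δ, sum_sub_distrib]⟩

lemma degen_eq_sInf_residual {ν0 : Measure (Fin K → ℝ)} [IsFiniteMeasure ν0]
    (hsupp : ν0 (simplex K)ᶜ = 0) {θ : Fin K → Fin V → ℝ} (hθ : ∀ k v, 0 < θ k v) (p : ℕ) :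
    degen ν0 m θ p = sInf (residual ν0 m θ p '' unitTangents V K) := by
  simp only [degen, integral_degen_integrand hsupp hθ]
  congr 1
  ext r
  simp [unitTangents, residual, eq_comm, and_assoc]

lemma forall_unitTangents_residual_pos_iff {ν0 : Measure (Fin K → ℝ)}
    {θ : Fin K → Fin V → ℝ} {p : ℕ} :
    (∀ δ ∈ unitTangents V K, 0 < residual ν0 m θ p δ) ↔
      ∀ δ, ((∀ x, polySystem ν0 m θ p δ x = 0) ∧ ∀ k, ∑ ℓ, δ k ℓ = 0) → δ = 0 := by
  constructor
  · rintro hpos δ ⟨hsys, hrow⟩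
    by_contra hδ
    have hres := hpos _ (inv_norm1_smul_mem_unitTangents hδ hrow)
    rw [residual_eq_zero_iff.2 fun x => by rw [polySystem_smul, hsys, mul_zero]] at hres
    exact hres.false
  · rintro hsol δ ⟨hnorm, hrow⟩
    refine (residual_nonneg ν0 m θ p δ).lt_of_ne' fun h0 => ?_
    rw [hsol δ ⟨residual_eq_zero_iff.1 h0, hrow⟩, norm1_eq_zero_iff.2 rfl] at hnorm
    exact zero_ne_one hnorm

theorem degen_pos_iff_poly_system_general
    {V K m : ℕ} (hV : 2 ≤ V) (hK : 2 ≤ K) {c0 : ℝ} (hc0 : 0 < c0)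
    (ν0 : Measure (Fin K → ℝ)) (hprob : IsProbabilityMeasure ν0)
    (hsupp : ν0 (simplex K)ᶜ = 0)
    (θ : Fin K → Fin V → ℝ) (hθ : θ ∈ Theta c0 V K)
    (p : ℕ) :
    0 < degen ν0 m θ p ↔
      ∀ δ : Fin K → Fin V → ℝ,
        ((∀ x : Fin m → Fin V,
            ∑ S ∈ Finset.powersetCard p (Finset.univ : Finset (Fin m)),
              ∑ j : {i // i ∈ S} → Fin K,
                (∫ h, (∏ i ∈ Sᶜ, pWord θ h (x i)) * ∏ i : {i // i ∈ S}, h (j i) ∂ν0) *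
                  ∏ i : {i // i ∈ S}, δ (j i) (x i.1) = 0) ∧
          (∀ k : Fin K, ∑ ℓ, δ k ℓ = 0)) → δ = 0 := by
  have hθpos : ∀ k v, 0 < θ k v := fun k v => hc0.trans_le (hθ.1 k v)
  rw [degen_eq_sInf_residual hsupp hθpos,
    isCompact_unitTangents.lt_sInf_iff_of_continuous (unitTangents_nonempty (by omega) hV)
      (continuous_residual ν0 m θ p).continuousOn]
  exact forall_unitTangents_residual_pos_iff

/-- **Proposition 1 (polynomial-system characterization of a positive degeneracy criterion).**
`𝔡_{m,p}(θ) > 0` if and only if the polynomial system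
`Σ_{i₁<⋯<i_p} Σ_{j₁,…,j_p} ξ(i,j;θ,x) Π_t δ_{j_t,x_{i_t}} = 0` (for all `x ∈ [V]^m`) together
with `Σ_k δ_{jk} = 0` (for all `j`) has no non-zero solution `δ`. -/
theorem degen_pos_iff_poly_system
    {V K m : ℕ} (hV : 2 ≤ V) (hK : 2 ≤ K) (hm : 1 ≤ m) {c0 : ℝ} (hc0 : 0 < c0)
    (ν0 : Measure (Fin K → ℝ)) (hprob : IsProbabilityMeasure ν0)
    (hsupp : ν0 (simplex K)ᶜ = 0)
    (θ : Fin K → Fin V → ℝ) (hθ : θ ∈ Theta c0 V K)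
    (p : ℕ) (hp1 : 1 ≤ p) (hpm : p ≤ m) :
    0 < degen ν0 m θ p ↔
      ∀ δ : Fin K → Fin V → ℝ,
        ((∀ x : Fin m → Fin V,
            ∑ S ∈ Finset.powersetCard p (Finset.univ : Finset (Fin m)),
              ∑ j : {i // i ∈ S} → Fin K,
                (∫ h, (∏ i ∈ Sᶜ, pWord θ h (x i)) * ∏ i : {i // i ∈ S}, h (j i) ∂ν0) *
                  ∏ i : {i // i ∈ S}, δ (j i) (x i.1) = 0) ∧
          (∀ k : Fin K, ∑ ℓ, δ k ℓ = 0)) → δ = 0 :=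
  degen_pos_iff_poly_system_general hV hK hc0 ν0 hprob hsupp θ hθ p

end TopicModel
end
end
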